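/- There exists a constant C > 0 such that for all integers n ≥ 2 and N ∈ [1..n] with N dividing n and n/(2N) an integer, in the second-phase process with standard bit mutation, the expected number of function evaluations until, for every j ∈ [0..n], some offspring with exactly j ones has been generated, is at most C·n^{n/(2N)}·N·ln n. -/

import Mathlib

open scoped ENNReal Classical

noncomputable section

/-- Bit strings of length `n`. -/
abbrev BitString (n : ℕ) : Type := Fin n → Bool

/-- The number of ones of a bit string. -/
def ones {n : ℕ} (x : BitString n) : ℕ := (Finset.univ.filter (fun i => x i = true)).card

/-- Hamming distance. -/
def hamming {n : ℕ} (x y : BitString n) : ℕ := (Finset.univ.filter (fun i => x i ≠ y i)).card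

/-- `mutOp` is standard bit mutation: each of the `n` bits of the parent is flipped
independently with probability `1/n`. -/
def IsStandardBitMutation (n : ℕ) (mutOp : BitString n → PMF (BitString n)) : Prop :=
  ∀ x y : BitString n,
    mutOp x y = ENNReal.ofReal ((1 / n : ℝ) ^ hamming x y * (1 - 1 / n : ℝ) ^ (n - hamming x y))

/-- The normalization constant `C_β = ∑_{i=1}^n i^{-β}` of the power-law distribution. -/
def powC (β : ℝ) (n : ℕ) : ℝ := ∑ i ∈ Finset.Icc 1 n, (i : ℝ) ^ (-β)

/-- `mutOp` is power-law mutation with exponent `β`: a mutation strength `X ∈ [1..n]` is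
sampled with `Pr[X = i] = i^{-β}/C_β`, and then a uniformly random subset of positions of
size `X` is flipped. -/
def IsPowerLawMutation (n : ℕ) (β : ℝ) (mutOp : BitString n → PMF (BitString n)) : Prop :=
  ∀ x y : BitString n,
    mutOp x y =
      if hamming x y = 0 then 0
      else ENNReal.ofReal
        ((hamming x y : ℝ) ^ (-β) / powC β n / (n.choose (hamming x y) : ℝ))

/-- One round of the second-phase process: for each `i ∈ [0..N]` (independently), an
offspring is generated by mutating the `i`-th parent, and its number of ones is added to
the set `A` of one-counts generated so far. -/
def roundStep (n N : ℕ) (mutOp : BitString n → PMF (BitString n))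
    (par : Fin (N + 1) → BitString n) (A : Set ℕ) : PMF (Set ℕ) :=
  (List.finRange (N + 1)).foldl
    (fun p i => p.bind fun B => (mutOp (par i)).map fun y => insert (ones y) B)
    (PMF.pure A)

/-- The law of the set of one-counts of offspring generated during the first `t` rounds of
the second-phase process, where `par t i` is the `i`-th parent used in round `t`. -/
def coveredPMF (n N : ℕ) (mutOp : BitString n → PMF (BitString n))
    (par : ℕ → Fin (N + 1) → BitString n) : ℕ → PMF (Set ℕ)
  | 0 => PMF.pure ∅
  | t + 1 => (coveredPMF n N mutOp par t).bind (roundStep n N mutOp (par t))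

/-- The expected number of function evaluations (`N + 1` per round) of the second-phase
process until every one-count in `target` has been realized by some offspring: since the
covered set only grows, this is `(N+1) · ∑_t Pr[T > t]` where `T` is the number of rounds
needed. -/
def phase2Evals (n N : ℕ) (mutOp : BitString n → PMF (BitString n))
    (par : ℕ → Fin (N + 1) → BitString n) (target : Set ℕ) : ℝ≥0∞ :=
  ((N : ℝ≥0∞) + 1) *
    ∑' t, (coveredPMF n N mutOp par t).toOuterMeasure {A | ¬ target ⊆ A}

/-!
Write `n = 2Nm`. Every one-count `j ∈ [0..n]` is within `m` of the one-count `2mi` of some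
parent, so in every round that parent's offspring has exactly `j` ones with probability at least
`r = n^{-m} (1 - 1/n)^n ≥ e^{-2} n^{-m}`, independently of the other rounds. Hence `j` is still
missing after `t` rounds with probability at most `(1 - r)^t`, some count is missing with
probability at most `min(1, (n + 1)(1 - r)^t)`, and summing over `t` bounds the expected number of
rounds by `(ln (n + 1) + 2) / r = O(n^m ln n)`.
-/

open Finset

theorem Finset.exists_card_eq_card_symmDiff_eq {α : Type*} [Fintype α] [DecidableEq α]
    (s : Finset α) {k : ℕ} (hk : k ≤ Fintype.card α) :
    ∃ t : Finset α, #t = k ∧ #(symmDiff s t) = (k - #s) + (#s - k) := by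
  rcases le_total #s k with hsk | hks
  · obtain ⟨t, hst, rfl⟩ := exists_superset_card_eq hsk hk
    refine ⟨t, rfl, ?_⟩
    rw [symmDiff_of_le hst, card_sdiff_of_subset hst]
    omega
  · obtain ⟨t, hts, rfl⟩ := exists_subset_card_eq hks
    refine ⟨t, rfl, ?_⟩
    rw [symmDiff_of_ge hts, card_sdiff_of_subset hts]
    omega

theorem exists_ones_eq_and_hamming_eq {n : ℕ} (x : BitString n) {j : ℕ} (hj : j ≤ n) :
    ∃ y : BitString n, ones y = j ∧ hamming x y = (j - ones x) + (ones x - j) := by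
  obtain ⟨t, ht, hxt⟩ :=
    (univ.filter fun i => x i = true).exists_card_eq_card_symmDiff_eq (k := j) (by simpa using hj)
  refine ⟨fun i => decide (i ∈ t), by simpa [ones] using ht, ?_⟩
  unfold hamming ones at *
  rw [← hxt]
  congr 1
  ext i
  cases hxi : x i <;> simp [mem_symmDiff, hxi]

theorem PMF.toOuterMeasure_apply_le_one {α : Type*} (p : PMF α) (s : Set α) :
    p.toOuterMeasure s ≤ 1 :=
  (p.toOuterMeasure_apply_eq_one_iff _).mpr (Set.subset_univ _) ▸
    MeasureTheory.measure_mono (Set.subset_univ s)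

theorem PMF.toOuterMeasure_apply_compl {α : Type*} (p : PMF α) (s : Set α) :
    p.toOuterMeasure sᶜ = 1 - p.toOuterMeasure s := by
  refine ENNReal.eq_sub_of_add_eq (ne_top_of_le_ne_top ENNReal.one_ne_top
    (p.toOuterMeasure_apply_le_one s)) ?_
  rw [PMF.toOuterMeasure_apply, PMF.toOuterMeasure_apply, ← ENNReal.tsum_add, ← p.tsum_coe]
  exact tsum_congr fun a => congrFun (Set.indicator_compl_add_self s p) a

theorem Real.exp_neg_two_le_one_sub_one_div_pow {n : ℕ} (hn : 2 ≤ n) :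
    Real.exp (-2) ≤ (1 - 1 / n : ℝ) ^ n := by
  have hn' : (2 : ℝ) ≤ n := by exact_mod_cast hn
  have hx : (0 : ℝ) < 1 - 1 / n := by
    rw [sub_pos, div_lt_one (by positivity)]; linarith
  have hlog : -2 ≤ n * Real.log (1 - 1 / n) := by
    have hlog_ge := Real.one_sub_inv_le_log_of_pos hx
    have hn1 : (0 : ℝ) < n - 1 := by linarith
    have hlog_ge' : -2 ≤ (n : ℝ) * (1 - (1 - 1 / (n : ℝ))⁻¹) := by
      field_simp
      linarith
    nlinarith
  calc Real.exp (-2) ≤ Real.exp (n * Real.log (1 - 1 / n)) := Real.exp_le_exp.mpr hlog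
    _ = (1 - 1 / n : ℝ) ^ n := by rw [Real.exp_nat_mul, Real.exp_log hx]

-- A lower bound on the probability `(1/n)^d (1 - 1/n)^(n-d)` that standard bit mutation creates
-- a given string at Hamming distance `d ≤ m` from its parent.
def standardBitMutationMinProb (n m : ℕ) : ℝ := (1 / n : ℝ) ^ m * (1 - 1 / n : ℝ) ^ n

theorem standardBitMutationMinProb_pos {n : ℕ} (hn : 2 ≤ n) (m : ℕ) :
    0 < standardBitMutationMinProb n m :=
  mul_pos (by positivity) ((Real.exp_pos _).trans_le (Real.exp_neg_two_le_one_sub_one_div_pow hn))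

theorem standardBitMutationMinProb_le_one (n m : ℕ) : standardBitMutationMinProb n m ≤ 1 := by
  have hu : (1 / n : ℝ) ≤ 1 := by simpa using Nat.cast_inv_le_one n
  exact mul_le_one₀ (pow_le_one₀ (by positivity) hu) (by positivity)
    (pow_le_one₀ (by linarith) (by simp))

theorem inv_standardBitMutationMinProb_le {n : ℕ} (hn : 2 ≤ n) (m : ℕ) :
    (standardBitMutationMinProb n m)⁻¹ ≤ Real.exp 2 * n ^ m := by
  have h := Real.exp_neg_two_le_one_sub_one_div_pow hn
  rw [standardBitMutationMinProb, mul_inv, mul_comm, one_div_pow, inv_div, div_one]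
  gcongr
  rwa [inv_le_comm₀ ((Real.exp_pos _).trans_le h) (Real.exp_pos _), ← Real.exp_neg]

namespace IsStandardBitMutation

variable {n : ℕ} {mutOp : BitString n → PMF (BitString n)}

theorem ofReal_le_apply (hmut : IsStandardBitMutation n mutOp) {x y : BitString n} {m : ℕ}
    (hxy : hamming x y ≤ m) :
    ENNReal.ofReal (standardBitMutationMinProb n m) ≤ mutOp x y := by
  rw [hmut x y, standardBitMutationMinProb]
  have hu : (1 / n : ℝ) ≤ 1 := by simpa using Nat.cast_inv_le_one n
  apply ENNReal.ofReal_le_ofReal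
  gcongr ?_ * ?_
  · exact pow_le_pow_of_le_one (by positivity) hu hxy
  · exact pow_le_pow_of_le_one (by linarith) (by simp) (Nat.sub_le _ _)

theorem ofReal_le_toOuterMeasure_ones_eq (hmut : IsStandardBitMutation n mutOp)
    (x : BitString n) {j m : ℕ} (hj : j ≤ n) (hjm : (j - ones x) + (ones x - j) ≤ m) :
    ENNReal.ofReal (standardBitMutationMinProb n m) ≤ (mutOp x).toOuterMeasure {y | ones y = j} := by
  obtain ⟨y, rfl, hxy⟩ := exists_ones_eq_and_hamming_eq x hj
  calc _ ≤ mutOp x y := hmut.ofReal_le_apply (hxy ▸ hjm)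
    _ = (mutOp x).toOuterMeasure {y} := (PMF.toOuterMeasure_apply_singleton _ _).symm
    _ ≤ _ := MeasureTheory.measure_mono (by simp)

end IsStandardBitMutation

section SecondPhase

variable {n N : ℕ} (mutOp : BitString n → PMF (BitString n)) (j : ℕ)

theorem toOuterMeasure_bind_offspring_notMem (x : BitString n) (p : PMF (Set ℕ)) :
    (p.bind fun B => (mutOp x).map fun y => insert (ones y) B).toOuterMeasure {A | j ∉ A}
      = (mutOp x).toOuterMeasure {y | ones y ≠ j} * p.toOuterMeasure {A | j ∉ A} := by
  rw [PMF.toOuterMeasure_bind_apply, PMF.toOuterMeasure_apply p, ← ENNReal.tsum_mul_left]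
  refine tsum_congr fun B => ?_
  rw [PMF.toOuterMeasure_map_apply]
  by_cases hB : j ∈ B
  · simp [hB]
  · simp [hB, eq_comm, mul_comm]

theorem roundStep_toOuterMeasure_notMem (par : Fin (N + 1) → BitString n) (A : Set ℕ) :
    (roundStep n N mutOp par A).toOuterMeasure {B | j ∉ B}
      = (∏ i, (mutOp (par i)).toOuterMeasure {y | ones y ≠ j})
          * (PMF.pure A).toOuterMeasure {B | j ∉ B} := by
  suffices ∀ (l : List (Fin (N + 1))) (p : PMF (Set ℕ)),
      (l.foldl (fun p i => p.bind fun B => (mutOp (par i)).map fun y => insert (ones y) B)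
        p).toOuterMeasure {B | j ∉ B}
        = (l.map fun i => (mutOp (par i)).toOuterMeasure {y | ones y ≠ j}).prod
            * p.toOuterMeasure {B | j ∉ B} by
    rw [roundStep, this, Fin.prod_univ_def]
  intro l
  induction l with
  | nil => simp
  | cons i l ih =>
    intro p
    rw [List.foldl_cons, ih, toOuterMeasure_bind_offspring_notMem, List.map_cons,
      List.prod_cons, mul_assoc, mul_left_comm]

theorem coveredPMF_toOuterMeasure_notMem (par : ℕ → Fin (N + 1) → BitString n) (t : ℕ) :
    (coveredPMF n N mutOp par t).toOuterMeasure {A | j ∉ A}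
      = ∏ s ∈ range t, ∏ i, (mutOp (par s i)).toOuterMeasure {y | ones y ≠ j} := by
  induction t with
  | zero => simp [coveredPMF]
  | succ t ih =>
    rw [coveredPMF, PMF.toOuterMeasure_bind_apply, prod_range_succ, ← ih, mul_comm,
      PMF.toOuterMeasure_apply, ← ENNReal.tsum_mul_left]
    refine tsum_congr fun A => ?_
    rw [roundStep_toOuterMeasure_notMem, PMF.toOuterMeasure_pure_apply]
    by_cases hA : j ∈ A <;> simp [hA, mul_comm]

theorem coveredPMF_toOuterMeasure_notMem_le (par : ℕ → Fin (N + 1) → BitString n)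
    {q : ℝ≥0∞} (hq : ∀ t, ∃ i, q ≤ (mutOp (par t i)).toOuterMeasure {y | ones y = j})
    (t : ℕ) :
    (coveredPMF n N mutOp par t).toOuterMeasure {A | j ∉ A} ≤ (1 - q) ^ t := by
  rw [coveredPMF_toOuterMeasure_notMem, pow_eq_prod_const]
  refine prod_le_prod' fun s _ => ?_
  obtain ⟨i, hi⟩ := hq s
  have hmiss : ∀ i, (mutOp (par s i)).toOuterMeasure {y | ones y ≠ j}
      = 1 - (mutOp (par s i)).toOuterMeasure {y | ones y = j} :=
    fun i => PMF.toOuterMeasure_apply_compl _ {y | ones y = j}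
  calc ∏ i, (mutOp (par s i)).toOuterMeasure {y | ones y ≠ j}
      = (mutOp (par s i)).toOuterMeasure {y | ones y ≠ j}
          * ∏ i ∈ univ.erase i, (mutOp (par s i)).toOuterMeasure {y | ones y ≠ j} :=
        (mul_prod_erase _ _ (mem_univ i)).symm
    _ ≤ (mutOp (par s i)).toOuterMeasure {y | ones y ≠ j} :=
        mul_le_of_le_one_right' <|
          prod_le_one' fun _ _ => PMF.toOuterMeasure_apply_le_one _ {y | ones y ≠ j}
    _ ≤ 1 - q := hmiss i ▸ tsub_le_tsub_left hi 1

theorem coveredPMF_toOuterMeasure_not_subset_le (par : ℕ → Fin (N + 1) → BitString n)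
    (s : Finset ℕ) {q : ℝ≥0∞}
    (hq : ∀ j ∈ s, ∀ t, ∃ i, q ≤ (mutOp (par t i)).toOuterMeasure {y | ones y = j}) (t : ℕ) :
    (coveredPMF n N mutOp par t).toOuterMeasure {A | ¬ ↑s ⊆ A} ≤ #s * (1 - q) ^ t := by
  have hunion : {A : Set ℕ | ¬ ↑s ⊆ A} = ⋃ j ∈ s, {A | j ∉ A} := by
    ext A
    simp [Set.subset_def]
  calc _ ≤ ∑ j ∈ s, (coveredPMF n N mutOp par t).toOuterMeasure {A | j ∉ A} :=
        hunion ▸ MeasureTheory.measure_biUnion_finset_le _ _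
    _ ≤ ∑ _j ∈ s, (1 - q) ^ t :=
        sum_le_sum fun j hj => coveredPMF_toOuterMeasure_notMem_le mutOp j par (hq j hj) t
    _ = #s * (1 - q) ^ t := by rw [sum_const, nsmul_eq_mul]

end SecondPhase

theorem Nat.exists_fin_succ_dist_mul_le {N m j : ℕ} (hj : j ≤ N * (2 * m)) :
    ∃ i : Fin (N + 1), (j - i * (2 * m)) + (i * (2 * m) - j) ≤ m := by
  rcases m.eq_zero_or_pos with rfl | hm
  · exact ⟨0, by simpa using hj⟩
  have hlo := Nat.div_mul_le_self (j + m) (2 * m)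
  have hhi := Nat.lt_div_mul_add (a := j + m) (show 0 < 2 * m by omega)
  refine ⟨⟨(j + m) / (2 * m), ?_⟩, by simp only; omega⟩
  rw [Nat.div_lt_iff_lt_mul (by omega)]
  nlinarith

theorem ENNReal.tsum_le_of_le_one_of_le_mul_geometric {f : ℕ → ℝ≥0∞} {K : ℕ} {r : ℝ}
    (hK : 1 ≤ K) (hr : 0 < r) (hr1 : r ≤ 1) (hf1 : ∀ t, f t ≤ 1)
    (hfK : ∀ t, f t ≤ K * (1 - ENNReal.ofReal r) ^ t) :
    ∑' t, f t ≤ ENNReal.ofReal ((Real.log K + 2) / r) := by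
  set t₀ := ⌈Real.log K / r⌉₊
  have hr1' : 0 ≤ 1 - r := by linarith
  replace hK : (1 : ℝ) ≤ K := by exact_mod_cast hK
  replace hfK (t : ℕ) : f t ≤ ENNReal.ofReal (K * (1 - r) ^ t) := by
    rw [ENNReal.ofReal_mul (by positivity), ENNReal.ofReal_natCast, ENNReal.ofReal_pow hr1',
      ENNReal.ofReal_sub _ hr.le, ENNReal.ofReal_one]
    exact hfK t
  have hlogK : 0 ≤ Real.log K := Real.log_nonneg hK
  have hK₀ : K * (1 - r) ^ t₀ ≤ 1 := by
    have ht₀ : Real.log K ≤ r * t₀ := (div_le_iff₀' hr).mp (Nat.le_ceil _)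
    calc K * (1 - r) ^ t₀ ≤ K * Real.exp (-r) ^ t₀ := by
          gcongr; linarith [Real.add_one_le_exp (-r)]
      _ = K * Real.exp (-(r * t₀)) := by rw [← Real.exp_nat_mul]; ring_nf
      _ ≤ K * Real.exp (-Real.log K) := by gcongr
      _ = 1 := by rw [Real.exp_neg, Real.exp_log (by linarith), mul_inv_cancel₀ (by linarith)]
  have htail : ∑' i, f (i + t₀) ≤ ENNReal.ofReal (1 / r) := by
    calc ∑' i, f (i + t₀) ≤ ∑' i, ENNReal.ofReal (1 - r) ^ i := by
          refine ENNReal.tsum_le_tsum fun i => (hfK _).trans ?_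
          rw [← ENNReal.ofReal_pow hr1']
          refine ENNReal.ofReal_le_ofReal ?_
          calc K * (1 - r) ^ (i + t₀) = K * (1 - r) ^ t₀ * (1 - r) ^ i := by ring
            _ ≤ 1 * (1 - r) ^ i := by gcongr
            _ = (1 - r) ^ i := one_mul _
      _ = ENNReal.ofReal (1 / r) := by
          rw [ENNReal.tsum_geometric, ← ENNReal.ofReal_one, ← ENNReal.ofReal_sub _ hr1',
            _root_.sub_sub_cancel, one_div, ENNReal.ofReal_inv_of_pos hr]
  have hhead : ∑ i ∈ range t₀, f i ≤ t₀ := by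
    simpa using sum_le_sum fun i (_ : i ∈ range t₀) => hf1 i
  have ht₀ : (t₀ : ℝ) ≤ Real.log K / r + 1 := (Nat.ceil_lt_add_one (by positivity)).le
  have h1r : 1 ≤ 1 / r := by rw [le_div_iff₀ hr]; linarith
  rw [← (ENNReal.summable (f := fun i => f (i + t₀))).sum_add_tsum_nat_add']
  calc ∑ i ∈ range t₀, f i + ∑' i, f (i + t₀) ≤ ENNReal.ofReal t₀ + ENNReal.ofReal (1 / r) := by
        rw [ENNReal.ofReal_natCast]; gcongr
    _ = ENNReal.ofReal (t₀ + 1 / r) := (ENNReal.ofReal_add (by positivity) (by positivity)).symm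
    _ ≤ ENNReal.ofReal ((Real.log K + 2) / r) := by
        refine ENNReal.ofReal_le_ofReal ?_
        rw [add_div, div_eq_mul_one_div 2 r]
        linarith

theorem Real.log_natCast_add_one_add_two_le {n : ℕ} (hn : 2 ≤ n) :
    Real.log (n + 1) + 2 ≤ 5 * Real.log n := by
  have hn' : (2 : ℝ) ≤ n := by exact_mod_cast hn
  have hlog2 : 2 / 3 ≤ Real.log n :=
    (Real.log_two_gt_d9.le.trans' (by norm_num)).trans (Real.log_le_log (by norm_num) hn')
  have hsq : Real.log (n + 1) ≤ 2 * Real.log n := by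
    have h := Real.log_le_log (by positivity) (show (n + 1 : ℝ) ≤ n ^ 2 by nlinarith)
    rwa [Real.log_pow, Nat.cast_ofNat] at h
  linarith

theorem add_one_mul_div_standardBitMutationMinProb_le {n N : ℕ} (hn : 2 ≤ n) (hN : 1 ≤ N)
    (m : ℕ) :
    (N + 1) * ((Real.log (n + 1) + 2) / standardBitMutationMinProb n m)
      ≤ 10 * Real.exp 2 * n ^ m * N * Real.log n := by
  have hN' : (N + 1 : ℝ) ≤ 2 * N := by
    have : (1 : ℝ) ≤ N := by exact_mod_cast hN
    linarith
  have hr := (inv_pos.mpr (standardBitMutationMinProb_pos hn m)).le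
  have hlog : 0 ≤ Real.log n := Real.log_natCast_nonneg n
  have hlog' : 0 ≤ Real.log (n + 1) := Real.log_nonneg (by simp)
  rw [div_eq_mul_inv]
  calc (N + 1) * ((Real.log (n + 1) + 2) * (standardBitMutationMinProb n m)⁻¹)
      ≤ (2 * N) * ((5 * Real.log n) * (Real.exp 2 * n ^ m)) :=
        mul_le_mul hN' (mul_le_mul (Real.log_natCast_add_one_add_two_le hn)
          (inv_standardBitMutationMinProb_le hn m) hr (by linarith))
          (mul_nonneg (by linarith) hr) (by positivity)
    _ = 10 * Real.exp 2 * n ^ m * N * Real.log n := by ring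

/-- In the second-phase process with standard bit mutation (parents with
`i·n/N` ones, `n/(2N)` integer), the expected number of function evaluations until, for
every `j ∈ [0..n]`, some offspring with exactly `j` ones has been generated, is
`O(n^{n/(2N)} N ln n)`. -/
theorem phase2_standard_bit_upper :
    ∃ C : ℝ, 0 < C ∧
      ∀ n N : ℕ, 2 ≤ n → 1 ≤ N → N ≤ n → N ∣ n → 2 * N ∣ n →
        ∀ mutOp : BitString n → PMF (BitString n), IsStandardBitMutation n mutOp →
          ∀ par : ℕ → Fin (N + 1) → BitString n,
            (∀ t : ℕ, ∀ i : Fin (N + 1), ones (par t i) = (i : ℕ) * (n / N)) →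
            phase2Evals n N mutOp par {j | j ≤ n}
              ≤ ENNReal.ofReal
                  (C * (n : ℝ) ^ ((n : ℝ) / (2 * N)) * N * Real.log n) := by
  refine ⟨10 * Real.exp 2, by positivity, fun n N hn hN _ _ ⟨m, hnm⟩ mutOp hmut par hpar => ?_⟩
  have hgap : n / N = 2 * m := by
    rw [hnm, show 2 * N * m = N * (2 * m) by ring, Nat.mul_div_cancel_left _ hN]
  have hhit : ∀ j ∈ range (n + 1), ∀ t, ∃ i : Fin (N + 1), ENNReal.ofReal
      (standardBitMutationMinProb n m) ≤ (mutOp (par t i)).toOuterMeasure {y | ones y = j} := by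
    intro j hj t
    have hjn : j ≤ n := mem_range_succ_iff.mp hj
    obtain ⟨i, hi⟩ := Nat.exists_fin_succ_dist_mul_le (j := j) (m := m)
      (hjn.trans_eq (by rw [hnm]; ring))
    exact ⟨i, hmut.ofReal_le_toOuterMeasure_ones_eq _ hjn (by rwa [hpar, hgap])⟩
  have htarget : {j | j ≤ n} = ((range (n + 1) : Finset ℕ) : Set ℕ) := by
    ext j; simp
  have hsum := ENNReal.tsum_le_of_le_one_of_le_mul_geometric (by omega)
    (standardBitMutationMinProb_pos hn m) (standardBitMutationMinProb_le_one n m)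
    (fun t => PMF.toOuterMeasure_apply_le_one _ _)
    (fun t => (card_range (n + 1)) ▸ coveredPMF_toOuterMeasure_not_subset_le mutOp par _ hhit t)
  have hexp : (n : ℝ) ^ ((n : ℝ) / (2 * N)) = (n : ℝ) ^ m := by
    rw [← Real.rpow_natCast]
    congr 1
    field_simp
    exact_mod_cast hnm
  rw [phase2Evals, htarget, hexp, ← ENNReal.ofReal_natCast, ← ENNReal.ofReal_one,
    ← ENNReal.ofReal_add (by positivity) zero_le_one]
  refine (mul_le_mul_right hsum _).trans ?_
  rw [← ENNReal.ofReal_mul (by positivity)]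
  refine ENNReal.ofReal_le_ofReal ?_
  exact_mod_cast add_one_mul_div_standardBitMutationMinProb_le hn hN m

end
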